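/- arXiv:2508.18578 — 6 statements merged into one kernel-verified Lean document; each statement's English description precedes it below -/
import Mathlib

section
/- Let K be a field, s a nonzero element of K, and consider the map φ(x,y,t) = (t/(x - y/s), s·x/y, s·t) defined for x,y,t nonzero with x ≠ y/s. If s = 1, then the rational function I₁(x,y,t) = y - x + x/y - t/x is an integral of motion: whenever (x̄,ȳ,t̄) = φ(x,y,t) is defined and has nonzero coordinates, I₁(x̄,ȳ,t̄) = I₁(x,y,t). -/
/-- For s = 1, I₁(x,y,t) = y - x + x/y - t/x is an integral of
motion of the map x̄ = t/(x-y), ȳ = x/y, t̄ = t. -/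
theorem qP1_integral_s_eq_one {K : Type*} [Field K]
    (x y t : K) (hx : x ≠ 0) (hy : y ≠ 0) (ht : t ≠ 0)
    (hxy : x - y ≠ 0)
    (hx' : t / (x - y) ≠ 0) (hy' : x / y ≠ 0) :
    (x / y) - (t / (x - y)) + (t / (x - y)) / (x / y) - t / (t / (x - y))
      = y - x + x / y - t / x := by
  field_simp
  ring
end

section
/- Let K be a field of characteristic not 2 and s = -1 ∈ K. Consider the map x̄ = t/(x + y), ȳ = -x/y, t̄ = -t (defined for x,y,t nonzero with x + y ≠ 0). Then I₂(x,y,t) = -t²/x² + 2ty/x + 2t/y - x²/y² + 2x²/y - x² - 2xy + 2x - y² satisfies I₂(x̄,ȳ,t̄) = I₂(x,y,t) whenever both sides are defined (all relevant denominators nonzero). -/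
/-- The integral `I₂` of the `s = -1` map. -/
def qP1Invariant {K : Type*} [Field K] (x y t : K) : K :=
  -t^2 / x^2 + 2*t*y / x + 2*t / y - x^2 / y^2 + 2*x^2 / y - x^2 - 2*x*y + 2*x - y^2

theorem qP1Invariant_map {K : Type*} [Field K] {x y t : K} (hx : x ≠ 0) (hy : y ≠ 0)
    (ht : t ≠ 0) (hxy : x + y ≠ 0) :
    qP1Invariant (t / (x + y)) (-x / y) (-t) = qP1Invariant x y t := by
  unfold qP1Invariant
  field_simp
  ring

theorem qP1_integral_s_eq_neg_one_general {K : Type*} [Field K]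
    (x y t : K) (hx : x ≠ 0) (hy : y ≠ 0) (ht : t ≠ 0)
    (hxy : x + y ≠ 0) :
    (-(-t)^2 / (t / (x + y))^2 + 2*(-t)*(-x/y) / (t / (x + y)) + 2*(-t) / (-x/y)
      - (t / (x + y))^2 / (-x/y)^2 + 2*(t / (x + y))^2 / (-x/y)
      - (t / (x + y))^2 - 2*(t / (x + y))*(-x/y) + 2*(t / (x + y)) - (-x/y)^2)
    = (-t^2 / x^2 + 2*t*y / x + 2*t / y - x^2 / y^2 + 2*x^2 / y
      - x^2 - 2*x*y + 2*x - y^2) :=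
  qP1Invariant_map hx hy ht hxy

/-- For s = -1 (char K ≠ 2), the quantity
I₂(x,y,t) = -t²/x² + 2ty/x + 2t/y - x²/y² + 2x²/y - x² - 2xy + 2x - y²
is invariant under x̄ = t/(x+y), ȳ = -x/y, t̄ = -t. -/
theorem qP1_integral_s_eq_neg_one {K : Type*} [Field K] (hchar : (2 : K) ≠ 0)
    (x y t : K) (hx : x ≠ 0) (hy : y ≠ 0) (ht : t ≠ 0)
    (hxy : x + y ≠ 0)
    (hx' : t / (x + y) ≠ 0) (hy' : -x / y ≠ 0) :
    (-(-t)^2 / (t / (x + y))^2 + 2*(-t)*(-x/y) / (t / (x + y)) + 2*(-t) / (-x/y)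
      - (t / (x + y))^2 / (-x/y)^2 + 2*(t / (x + y))^2 / (-x/y)
      - (t / (x + y))^2 - 2*(t / (x + y))*(-x/y) + 2*(t / (x + y)) - (-x/y)^2)
    = (-t^2 / x^2 + 2*t*y / x + 2*t / y - x^2 / y^2 + 2*x^2 / y
      - x^2 - 2*x*y + 2*x - y^2) :=
  qP1_integral_s_eq_neg_one_general x y t hx hy ht hxy
end

section
/- Let K be a field and define the 2×2 matrix A(z) = A₀ + z·A₁ + z²·A₂ over K(x,y,t,w), where A₂ = [[1,0],[0,0]], A₀ = [[t + x - xy, -wx],[w⁻¹(t + x - ty - 2xy + xy²), x(y-1)]], and A₁ = [[y - x + x/y - 1 - t/x, w],[w⁻¹(y - 2x - 1 + xy + x/y - t/x), 1]]. Then det A(z) = z³. -/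
open Matrix

/-- The q-Painlevé I Lax matrix A(z) = A₀ + z A₁ + z² A₂ has
determinant z³. -/
theorem qP1_lax_det {K : Type*} [Field K]
    (x y t w : K) (hx : x ≠ 0) (hy : y ≠ 0) (hw : w ≠ 0) (z : K) :
    (!![(t + x - x*y) + z*(y - x + x/y - 1 - t/x) + z^2,
        (-(w*x)) + z*w;
        w⁻¹*(t + x - t*y - 2*x*y + x*y^2) + z*(w⁻¹*(y - 2*x - 1 + x*y + x/y - t/x)),
        x*(y - 1) + z] : Matrix (Fin 2) (Fin 2) K).det = z^3 := by
  rw [det_fin_two_of]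
  field_simp
  ring
end

section
/- Let q be a prime power and fix s, t ∈ F_q with s, t ≠ 0. The evolution map on states defined by: for j = 0 with sx ≠ y, (0,x,y) ↦ (0, t/(x - y/s), sx/y); for j = 0 with sx = y, (0,x,y) ↦ (1, 0, t/x); (1,0,y) ↦ (2, 0, st(1 - sy)); (2,0,y) ↦ (3, 0, sy); (3,0,y) ↦ (4, 0, s(sy - t)/t); for j = 4 with y ≠ 0, (4,0,y) ↦ (0, -s²t/y, 1); and (4,0,0) ↦ (1,0,0) — together with t ↦ st — is a bijection from the set of states with time parameter t to the set of states with time parameter st. -/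
/-! The evolution has an explicit inverse of the same shape. On the generic chart `j = 0` it is
`(x, y) ↦ (t y / (x (y - 1)), s t / (x (y - 1)))` off the line `y = 1`, which comes from chart `4`;
the points of chart `1` with `y ≠ 0` come from the line `s x = y` of chart `0`, and the rest of
the charts `1, …, 4` is undone by affine maps. -/

/-- The valid states of the q-Painlevé I initial value space over a field `F`:
`j = 0` with `x, y ≠ 0`, or `1 ≤ j ≤ 4` with `x = 0`. -/
def qP1States (F : Type*) [Field F] : Set (Fin 5 × F × F) :=
  {p | (p.1 = 0 ∧ p.2.1 ≠ 0 ∧ p.2.2 ≠ 0) ∨ (p.1 ≠ 0 ∧ p.2.1 = 0)}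

/-- The resolved q-Painlevé I evolution on states, for parameters `s, t`. -/
def qP1Evolve {F : Type*} [Field F] [DecidableEq F] (s t : F) :
    Fin 5 × F × F → Fin 5 × F × F :=
  fun p =>
    let j := p.1; let x := p.2.1; let y := p.2.2
    if j = 0 then
      (if s * x = y then (1, 0, t / x) else (0, t / (x - y / s), s * x / y))
    else if j = 1 then (2, 0, s * t * (1 - s * y))
    else if j = 2 then (3, 0, s * y)
    else if j = 3 then (4, 0, s * (s * y - t) / t)
    else (if y = 0 then (1, 0, 0) else (0, -(s^2) * t / y, 1))

section States

variable {F : Type*} [Field F]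

theorem sub_div_ne_zero_of_mul_ne {s x y : F} (hs : s ≠ 0) (h : s * x ≠ y) : x - y / s ≠ 0 := by
  rwa [Ne, sub_eq_zero, eq_div_iff hs, mul_comm]

theorem qP1States.induction {P : Fin 5 × F × F → Prop}
    (zero : ∀ x y : F, x ≠ 0 → y ≠ 0 → P (0, x, y)) (one : ∀ y : F, P (1, 0, y))
    (two : ∀ y : F, P (2, 0, y)) (three : ∀ y : F, P (3, 0, y)) (four : ∀ y : F, P (4, 0, y)) :
    ∀ p ∈ qP1States F, P p := by
  rintro ⟨j, x, y⟩ (⟨rfl, hx, hy⟩ | ⟨hj, rfl⟩)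
  · exact zero x y hx hy
  · fin_cases j
    exacts [absurd rfl hj, one y, two y, three y, four y]

theorem qP1States.generic_mem {x y : F} (hx : x ≠ 0) (hy : y ≠ 0) :
    ((0 : Fin 5), x, y) ∈ qP1States F :=
  Or.inl ⟨rfl, hx, hy⟩

theorem qP1States.exceptional_mem {j : Fin 5} (hj : j ≠ 0) (y : F) :
    (j, (0 : F), y) ∈ qP1States F :=
  Or.inr ⟨hj, rfl⟩

end States

section Evolution

variable {F : Type*} [Field F] [DecidableEq F] (s t : F) {x y : F}

def qP1EvolveInv : Fin 5 × F × F → Fin 5 × F × F :=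
  fun p =>
    let j := p.1; let x := p.2.1; let y := p.2.2
    if j = 0 then
      (if y = 1 then (4, 0, -(s^2) * t / x) else (0, t * y / (x * (y - 1)), s * t / (x * (y - 1))))
    else if j = 1 then (if y = 0 then (4, 0, 0) else (0, t / y, s * t / y))
    else if j = 2 then (1, 0, (1 - y / (s * t)) / s)
    else if j = 3 then (2, 0, y / s)
    else (3, 0, (t * y / s + t) / s)

theorem qP1Evolve_zero_of_eq (h : s * x = y) : qP1Evolve s t (0, x, y) = (1, 0, t / x) := by
  simp [qP1Evolve, h]

theorem qP1Evolve_zero_of_ne (h : s * x ≠ y) :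
    qP1Evolve s t (0, x, y) = (0, t / (x - y / s), s * x / y) := by
  simp [qP1Evolve, h]

theorem qP1Evolve_one : qP1Evolve s t (1, 0, y) = (2, 0, s * t * (1 - s * y)) := by
  simp [qP1Evolve]

theorem qP1Evolve_two : qP1Evolve s t (2, 0, y) = (3, 0, s * y) := by
  simp [qP1Evolve]

theorem qP1Evolve_three : qP1Evolve s t (3, 0, y) = (4, 0, s * (s * y - t) / t) := by
  simp [qP1Evolve]

theorem qP1Evolve_four_zero : qP1Evolve s t (4, 0, (0 : F)) = (1, 0, 0) := by
  simp [qP1Evolve]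

theorem qP1Evolve_four_of_ne_zero (h : y ≠ 0) :
    qP1Evolve s t (4, 0, y) = (0, -(s^2) * t / y, 1) := by
  simp [qP1Evolve, h]

theorem qP1EvolveInv_zero_of_eq_one (h : y = 1) :
    qP1EvolveInv s t (0, x, y) = (4, 0, -(s^2) * t / x) := by
  simp [qP1EvolveInv, h]

theorem qP1EvolveInv_zero_of_ne_one (h : y ≠ 1) :
    qP1EvolveInv s t (0, x, y) = (0, t * y / (x * (y - 1)), s * t / (x * (y - 1))) := by
  simp [qP1EvolveInv, h]

theorem qP1EvolveInv_one_zero : qP1EvolveInv s t (1, 0, (0 : F)) = (4, 0, 0) := by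
  simp [qP1EvolveInv]

theorem qP1EvolveInv_one_of_ne_zero (h : y ≠ 0) :
    qP1EvolveInv s t (1, 0, y) = (0, t / y, s * t / y) := by
  simp [qP1EvolveInv, h]

theorem qP1EvolveInv_two : qP1EvolveInv s t (2, 0, y) = (1, 0, (1 - y / (s * t)) / s) := by
  simp [qP1EvolveInv]

theorem qP1EvolveInv_three : qP1EvolveInv s t (3, 0, y) = (2, 0, y / s) := by
  simp [qP1EvolveInv]

theorem qP1EvolveInv_four : qP1EvolveInv s t (4, 0, y) = (3, 0, (t * y / s + t) / s) := by
  simp [qP1EvolveInv]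

variable {s t}

theorem qP1Evolve_mapsTo (hs : s ≠ 0) (ht : t ≠ 0) :
    Set.MapsTo (qP1Evolve s t) (qP1States F) (qP1States F) := by
  refine qP1States.induction (fun x y hx hy => ?_) (fun y => ?_) (fun y => ?_) (fun y => ?_)
    (fun y => ?_)
  · by_cases h : s * x = y
    · rw [qP1Evolve_zero_of_eq s t h]
      exact qP1States.exceptional_mem (by decide) _
    · rw [qP1Evolve_zero_of_ne s t h]
      exact qP1States.generic_mem (div_ne_zero ht (sub_div_ne_zero_of_mul_ne hs h))
        (div_ne_zero (mul_ne_zero hs hx) hy)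
  · rw [qP1Evolve_one]
    exact qP1States.exceptional_mem (by decide) _
  · rw [qP1Evolve_two]
    exact qP1States.exceptional_mem (by decide) _
  · rw [qP1Evolve_three]
    exact qP1States.exceptional_mem (by decide) _
  · by_cases hy : y = 0
    · rw [hy, qP1Evolve_four_zero]
      exact qP1States.exceptional_mem (by decide) _
    · rw [qP1Evolve_four_of_ne_zero s t hy]
      exact qP1States.generic_mem (by simp [hs, ht, hy]) one_ne_zero

theorem qP1EvolveInv_mapsTo (hs : s ≠ 0) (ht : t ≠ 0) :
    Set.MapsTo (qP1EvolveInv s t) (qP1States F) (qP1States F) := by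
  refine qP1States.induction (fun x y hx hy => ?_) (fun y => ?_) (fun y => ?_) (fun y => ?_)
    (fun y => ?_)
  · by_cases h : y = 1
    · rw [qP1EvolveInv_zero_of_eq_one s t h]
      exact qP1States.exceptional_mem (by decide) _
    · have hd : x * (y - 1) ≠ 0 := mul_ne_zero hx (sub_ne_zero.mpr h)
      rw [qP1EvolveInv_zero_of_ne_one s t h]
      exact qP1States.generic_mem (div_ne_zero (mul_ne_zero ht hy) hd)
        (div_ne_zero (mul_ne_zero hs ht) hd)
  · by_cases hy : y = 0
    · rw [hy, qP1EvolveInv_one_zero]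
      exact qP1States.exceptional_mem (by decide) _
    · rw [qP1EvolveInv_one_of_ne_zero s t hy]
      exact qP1States.generic_mem (div_ne_zero ht hy) (div_ne_zero (mul_ne_zero hs ht) hy)
  · rw [qP1EvolveInv_two]
    exact qP1States.exceptional_mem (by decide) _
  · rw [qP1EvolveInv_three]
    exact qP1States.exceptional_mem (by decide) _
  · rw [qP1EvolveInv_four]
    exact qP1States.exceptional_mem (by decide) _

theorem qP1EvolveInv_leftInvOn (hs : s ≠ 0) (ht : t ≠ 0) :
    Set.LeftInvOn (qP1EvolveInv s t) (qP1Evolve s t) (qP1States F) := by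
  refine qP1States.induction (fun x y hx hy => ?_) (fun y => ?_) (fun y => ?_) (fun y => ?_)
    (fun y => ?_)
  · by_cases h : s * x = y
    · rw [qP1Evolve_zero_of_eq s t h, qP1EvolveInv_one_of_ne_zero s t (div_ne_zero ht hx), ← h]
      congr 2 <;> field_simp
    · have hxy := sub_div_ne_zero_of_mul_ne hs h
      have h1 : s * x / y ≠ 1 := by rwa [Ne, div_eq_one_iff_eq hy]
      rw [qP1Evolve_zero_of_ne s t h, qP1EvolveInv_zero_of_ne_one s t h1]
      congr 2 <;> field_simp
  · rw [qP1Evolve_one, qP1EvolveInv_two]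
    congr 2
    field_simp
    ring
  · rw [qP1Evolve_two, qP1EvolveInv_three, mul_div_cancel_left₀ y hs]
  · rw [qP1Evolve_three, qP1EvolveInv_four]
    congr 2
    field_simp
    ring
  · by_cases hy : y = 0
    · rw [hy, qP1Evolve_four_zero, qP1EvolveInv_one_zero]
    · rw [qP1Evolve_four_of_ne_zero s t hy, qP1EvolveInv_zero_of_eq_one s t rfl]
      congr 2
      field_simp

theorem qP1EvolveInv_rightInvOn (hs : s ≠ 0) (ht : t ≠ 0) :
    Set.RightInvOn (qP1EvolveInv s t) (qP1Evolve s t) (qP1States F) := by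
  refine qP1States.induction (fun x y hx hy => ?_) (fun y => ?_) (fun y => ?_) (fun y => ?_)
    (fun y => ?_)
  · by_cases h : y = 1
    · have hy' : -(s ^ 2) * t / x ≠ 0 := by simp [hs, ht, hx]
      rw [qP1EvolveInv_zero_of_eq_one s t h, qP1Evolve_four_of_ne_zero s t hy', h]
      congr 2
      field_simp
    · have hy1 : y - 1 ≠ 0 := sub_ne_zero.mpr h
      have hne : s * (t * y / (x * (y - 1))) ≠ s * t / (x * (y - 1)) := by
        intro heq
        field_simp at heq
        exact h heq
      rw [qP1EvolveInv_zero_of_ne_one s t h, qP1Evolve_zero_of_ne s t hne]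
      congr 2 <;> field_simp
  · by_cases hy : y = 0
    · rw [hy, qP1EvolveInv_one_zero, qP1Evolve_four_zero]
    · rw [qP1EvolveInv_one_of_ne_zero s t hy, qP1Evolve_zero_of_eq s t (mul_div_assoc s t y).symm]
      congr 2
      field_simp
  · rw [qP1EvolveInv_two, qP1Evolve_one]
    congr 2
    field_simp
    ring
  · rw [qP1EvolveInv_three, qP1Evolve_two, mul_div_cancel₀ y hs]
  · rw [qP1EvolveInv_four, qP1Evolve_three]
    congr 2
    field_simp
    ring

end Evolution

theorem qP1Evolve_bijOn_general {F : Type*} [Field F] [DecidableEq F]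
    (s t : F) (hs : s ≠ 0) (ht : t ≠ 0) :
    Set.BijOn (qP1Evolve s t) (qP1States F) (qP1States F) := by
  exact Set.InvOn.bijOn ⟨qP1EvolveInv_leftInvOn hs ht, qP1EvolveInv_rightInvOn hs ht⟩
    (qP1Evolve_mapsTo hs ht) (qP1EvolveInv_mapsTo hs ht)

/-- The resolved q-Painlevé I evolution (with time `t ↦ st`) is a
bijection from the state space (with time parameter `t`) to the state space
(with time parameter `st`); the underlying set of states is the same. -/
theorem qP1Evolve_bijOn {F : Type*} [Field F] [Fintype F] [DecidableEq F]
    (s t : F) (hs : s ≠ 0) (ht : t ≠ 0) :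
    Set.BijOn (qP1Evolve s t) (qP1States F) (qP1States F) :=
  qP1Evolve_bijOn_general s t hs ht
end

section
/- Let K be a field of characteristic ≠ 2, t ∈ K∖{0}, and suppose y ∈ K satisfies y⁴ - y³ + 4ty² - 4ty + t = 0 with y ∉ {0, 1, 1/2}, and set x = y²/(1 - 2y). Then applying the s = -1 q-Painlevé I map twice returns (x, y, t) to itself: with x̄ = t/(x + y), ȳ = -x/y, t̄ = -t, the second iterate (x̿, y̿, t̿) equals (x, y, t). -/
/-!
On the curve `x * (1 - 2y) = y²` the quartic says exactly `t = x (x + y)`, so the first step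
`x̄ = t / (x + y)` leaves `x` unchanged and `ȳ = -x / y`. The second step then gives
`-x̄ / ȳ = y` at once, and `-t / (x̄ + ȳ) = x` reduces to the curve equation again.
-/

namespace QPainleveI

variable {K : Type*} [Field K] {t x y : K}

lemma add_mul_one_sub_two_mul (hcurve : x * (1 - 2 * y) = y ^ 2) :
    (x + y) * (1 - 2 * y) = y * (1 - y) := by
  linear_combination hcurve

lemma eq_mul_add_of_quartic (hy2 : 1 - 2 * y ≠ 0) (hcurve : x * (1 - 2 * y) = y ^ 2)
    (hquartic : y ^ 4 - y ^ 3 + 4 * t * y ^ 2 - 4 * t * y + t = 0) :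
    t = x * (x + y) := by
  refine mul_right_cancel₀ (pow_ne_zero 2 hy2) ?_
  linear_combination hquartic - (x + y) * (1 - 2 * y) * hcurve
    - y ^ 2 * add_mul_one_sub_two_mul hcurve

lemma div_add_eq_self (hxy : x + y ≠ 0) (ht : t = x * (x + y)) : t / (x + y) = x := by
  rw [ht, mul_div_cancel_right₀ _ hxy]

lemma neg_div_add_neg_div_eq_self (hx0 : x ≠ 0) (hy0 : y ≠ 0) (hy1 : y ≠ 1)
    (hcurve : x * (1 - 2 * y) = y ^ 2) (ht : t = x * (x + y)) :
    -t / (x + -x / y) = x := by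
  have hsum : x + -x / y = x * (y - 1) / y := by field_simp; ring
  have hy1' : y - 1 ≠ 0 := sub_ne_zero.mpr hy1
  rw [hsum]
  field_simp
  linear_combination x * hcurve - y * ht

end QPainleveI

open QPainleveI in
theorem qP1_algebraic_solution_s_neg_one_general {K : Type*} [Field K]
    (t y : K) (hy0 : y ≠ 0) (hy1 : y ≠ 1) (hy2 : 1 - 2 * y ≠ 0)
    (hquartic : y^4 - y^3 + 4*t*y^2 - 4*t*y + t = 0)
    (x : K) (hx : x = y^2 / (1 - 2*y)) :
    -t / (t / (x + y) + (-x / y)) = x ∧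
    -(t / (x + y)) / (-x / y) = y := by
  have hcurve : x * (1 - 2 * y) = y ^ 2 := by rw [hx, div_mul_cancel₀ _ hy2]
  have hx0 : x ≠ 0 := by
    rintro rfl
    exact pow_ne_zero 2 hy0 (by simpa using hcurve.symm)
  have hxy : x + y ≠ 0 := fun h ↦ mul_ne_zero hy0 (sub_ne_zero.mpr hy1.symm) <| by
    rw [← add_mul_one_sub_two_mul hcurve, h, zero_mul]
  have ht : t = x * (x + y) := eq_mul_add_of_quartic hy2 hcurve hquartic
  rw [div_add_eq_self hxy ht]
  exact ⟨neg_div_add_neg_div_eq_self hx0 hy0 hy1 hcurve ht,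
    div_div_cancel₀ (neg_ne_zero.mpr hx0)⟩

/-- If y⁴ - y³ + 4ty² - 4ty + t = 0 with y ∉ {0, 1, 1/2} and
x = y²/(1-2y), then (x,y,t) is a period-2 point of the s = -1 q-Painlevé I map
x̄ = t/(x+y), ȳ = -x/y, t̄ = -t (assuming the second-step denominator is
nonzero). -/
theorem qP1_algebraic_solution_s_neg_one {K : Type*} [Field K]
    (hchar : (2 : K) ≠ 0)
    (t y : K) (ht : t ≠ 0) (hy0 : y ≠ 0) (hy1 : y ≠ 1) (hy2 : 1 - 2 * y ≠ 0)
    (hquartic : y^4 - y^3 + 4*t*y^2 - 4*t*y + t = 0)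
    (x : K) (hx : x = y^2 / (1 - 2*y))
    (hden : t / (x + y) + (-x / y) ≠ 0) :
    -t / (t / (x + y) + (-x / y)) = x ∧
    -(t / (x + y)) / (-x / y) = y :=
  qP1_algebraic_solution_s_neg_one_general t y hy0 hy1 hy2 hquartic x hx
end

section
/- Let K be a field and s, t nonzero elements. If (x,y,t) evolves by the q-Painlevé I map x̄ = t/(x - s⁻¹y), ȳ = sx/y, t̄ = st, then eliminating x yields the second-order scalar equation ȳ·y_·y(y - 1) = st, where y_ denotes the previous value of y; i.e., if (x̄,ȳ) = φ(x,y) and (x,y) = φ(x_,y_) with all quantities defined and nonzero, then ȳ·y_ = st/(y(y - 1)). -/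
/-!
With `d = xₚ - yₚ/s`, the update rules give `y = s xₚ / yₚ`, `y - 1 = s d / yₚ` and `x = tₚ / d`,
so both sides equal `tₚ yₚ² / (xₚ d)` after clearing denominators. The degenerate cases are
absorbed by the convention `a / 0 = 0`: when `y = 0` both sides vanish, and `y = 1` forces `d = 0`,
hence `x = 0`.
-/

theorem sub_one_eq_mul_sub_div {K : Type*} [Field K] {s xp yp : K} (hs : s ≠ 0) (hyp : yp ≠ 0) :
    s * xp / yp - 1 = s / yp * (xp - yp / s) := by
  field_simp

theorem qP1_scalar_form_general {K : Type*} [Field K]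
    (s tp t xp yp x y : K)
    (hy : y = s * xp / yp) (hx : x = tp / (xp - yp / s)) (ht : t = s * tp) :
    (s * x / y) * yp = s * t / (y * (y - 1)) := by
  subst hy hx ht
  rcases eq_or_ne (s * xp / yp) 0 with hy0 | hy0
  · simp [hy0]
  obtain ⟨⟨hs, hxp⟩, hyp⟩ : (s ≠ 0 ∧ xp ≠ 0) ∧ yp ≠ 0 := by
    simpa only [ne_eq, div_eq_zero_iff, mul_eq_zero, not_or] using hy0
  have hy_sub_one := sub_one_eq_mul_sub_div (xp := xp) hs hyp
  rcases eq_or_ne (xp - yp / s) 0 with hd | hd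
  · simp [hd, hy_sub_one]
  rw [hy_sub_one]
  field_simp

/-- Eliminating x from the q-Painlevé I map yields the scalar
equation ȳ·yₚ = st/(y(y-1)): if y = s·xₚ/yₚ and x = tₚ/(xₚ - yₚ/s) come from the
previous step (xₚ, yₚ, tₚ denoting previous values), t = s·tₚ, and ȳ = s·x/y,
then ȳ·yₚ = s·t/(y·(y-1)). -/
theorem qP1_scalar_form {K : Type*} [Field K]
    (s tp t xp yp x y : K)
    (hs : s ≠ 0) (htp : tp ≠ 0) (hxp : xp ≠ 0) (hyp' : yp ≠ 0)
    (hx0 : x ≠ 0) (hy0 : y ≠ 0) (hy1 : y ≠ 1)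
    (hden : xp - yp / s ≠ 0)
    (hy : y = s * xp / yp) (hx : x = tp / (xp - yp / s)) (ht : t = s * tp) :
    (s * x / y) * yp = s * t / (y * (y - 1)) :=
  qP1_scalar_form_general s tp t xp yp x y hy hx ht
end
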